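/- arXiv:2209.06235 — 3 statements merged into one kernel-verified Lean document; each statement's English description precedes it below -/
import Mathlib

section
/- Lemma (existence of a population-optimal encoder): Let X be a finite set with equivalence relation ∼ having n∼ ≥ 2 equivalence classes and let M : X → {0,…,n∼−1} be a maximal invariant. Then the one-hot encoder φ : X → ℝ^{n∼} defined by φ(x) = e_{M(x)} (the M(x)-th standard basis vector) is population optimal for the ∼-invariant tasks T∼ and the linear probing family Q; in particular, a population-optimal encoder exists. -/
open scoped Classical
open Finset

namespace ISSL

/-- Number of equivalence classes of the equivalence relation `r` on `X`. -/
noncomputable def nequiv {X : Type*} (r : Setoid X) : ℕ := Nat.card (Quotient r)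

noncomputable instance instFintypeQuot {X : Type*} [Fintype X] (r : Setoid X) :
    Fintype (Quotient r) := Fintype.ofFinite _

/-- `M` is a maximal invariant for `r`: `M x = M x'` iff `x ∼ x'`. -/
def IsMaximalInvariant {X : Type*} (r : Setoid X) {k : ℕ} (M : X → Fin k) : Prop :=
  ∀ x x', M x = M x' ↔ r x x'

/-- A map is `∼`-invariant if it is constant on equivalence classes. -/
def IsInvariant {X : Type*} (r : Setoid X) {Z : Type*} (φ : X → Z) : Prop :=
  ∀ x x', r x x' → φ x = φ x'

/-- Argmax prediction `pred(v) = argmax_i v[i]` for a vector-output predictor. -/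
noncomputable def predArg {k : ℕ} [NeZero k] (v : Fin k → ℝ) : Fin k :=
  Classical.choose ((Finset.univ : Finset (Fin k)).exists_max_image v
    ⟨⟨0, Nat.pos_of_ne_zero (NeZero.ne k)⟩, Finset.mem_univ _⟩)

/-- Binary prediction `1[v ≥ 0]` from a scalar logit. -/
noncomputable def predBin (v : Fin 1 → ℝ) : Fin 2 := if 0 ≤ v 0 then 1 else 0

/-- A probing family on `ℝ^d`: for each output arity `k`, a set of maps `ℝ^d → ℝ^k`. -/
structure ProbingFamily (d : ℕ) where
  mem : (k : ℕ) → Set ((Fin d → ℝ) → (Fin k → ℝ))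

/-- The linear probing family: all maps `z ↦ Wᵀ z`. -/
def linearFamily (d : ℕ) : ProbingFamily d :=
  ⟨fun k => {f | ∃ W : Matrix (Fin d) (Fin k) ℝ, ∀ z j, f z j = ∑ i, W i j * z i}⟩

/-- `Q` contains all linear predictors. -/
def ContainsLinear {d : ℕ} (Q : ProbingFamily d) : Prop :=
  ∀ k, (linearFamily d).mem k ⊆ Q.mem k

/-- `Q` is closed under vector manipulation: concatenation of two members, coordinate
indexing of a member, and sums of two scalar-output members. -/
def ClosedUnderVectorManipulation {d : ℕ} (Q : ProbingFamily d) : Prop :=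
  (∀ (k k' : ℕ) (f : (Fin d → ℝ) → Fin k → ℝ) (g : (Fin d → ℝ) → Fin k' → ℝ),
      f ∈ Q.mem k → g ∈ Q.mem k' → (fun z => Fin.append (f z) (g z)) ∈ Q.mem (k + k')) ∧
  (∀ (k : ℕ) (f : (Fin d → ℝ) → Fin k → ℝ), f ∈ Q.mem k →
      ∀ i : Fin k, (fun z (_ : Fin 1) => f z i) ∈ Q.mem 1) ∧
  (∀ f g : (Fin d → ℝ) → Fin 1 → ℝ, f ∈ Q.mem 1 → g ∈ Q.mem 1 →
      (fun z j => f z j + g z j) ∈ Q.mem 1)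

/-- The classification rules induced by the probing family at arity `k`: for `k = 2`
a scalar-output predictor with sign prediction, for `k ≥ 3` a `k`-output predictor with
argmax prediction. -/
noncomputable def rules {d : ℕ} (Q : ProbingFamily d) : (k : ℕ) → Set ((Fin d → ℝ) → Fin k)
  | 0 => ∅
  | 1 => ∅
  | 2 => {h | ∃ f ∈ Q.mem 1, ∀ z, h z = predBin (f z)}
  | (n + 3) => {h | ∃ f ∈ Q.mem (n + 3), ∀ z, h z = predArg (f z)}

/-- A `k`-ary `∼`-invariant task: a joint distribution on `X × Fin k` such that for every
input the most likely label is unique and invariant under `∼`. -/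
structure InvTask (X : Type*) [Fintype X] (r : Setoid X) (k : ℕ) where
  p : X → Fin k → ℝ
  nonneg : ∀ x y, 0 ≤ p x y
  sum_one : ∑ x : X, ∑ y : Fin k, p x y = 1
  label : X → Fin k
  label_argmax : ∀ x y, y ≠ label x → p x y < p x (label x)
  label_inv : ∀ x x', r x x' → label x = label x'

variable {X : Type*} [Fintype X] {r : Setoid X} {d k : ℕ}

/-- Population 0-1 risk of a classification rule `h` through encoder `φ` on task `t`. -/
noncomputable def risk (t : InvTask X r k) (φ : X → Fin d → ℝ)
    (h : (Fin d → ℝ) → Fin k) : ℝ :=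
  ∑ x : X, ∑ y : Fin k, t.p x y * (if y = h (φ x) then 0 else 1)

/-- Bayes error of task `t`. -/
noncomputable def bayes (t : InvTask X r k) : ℝ := 1 - ∑ x : X, t.p x (t.label x)

/-- `φ` is population optimal: the best probe realizes the Bayes error on every invariant task. -/
noncomputable def PopOptimal (r : Setoid X) (Q : ProbingFamily d)
    (φ : X → Fin d → ℝ) : Prop :=
  ∀ k : ℕ, 2 ≤ k → k ≤ nequiv r → ∀ t : InvTask X r k,
    sInf ((fun h => risk t φ h) '' rules Q k) = bayes t

/-- Input marginal of task `t`. -/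
noncomputable def marginal (t : InvTask X r k) (x : X) : ℝ := ∑ y : Fin k, t.p x y

/-- Empirical 0-1 risk of rule `h` on a dataset of inputs labeled by the most likely label. -/
noncomputable def empRisk (t : InvTask X r k) (φ : X → Fin d → ℝ)
    (h : (Fin d → ℝ) → Fin k) {n : ℕ} (D : Fin n → X) : ℝ :=
  (∑ i : Fin n, if t.label (D i) = h (φ (D i)) then (0 : ℝ) else 1) / n

/-- `h` is an empirical risk minimizer on dataset `D`. -/
noncomputable def IsERM (Q : ProbingFamily d) (t : InvTask X r k) (φ : X → Fin d → ℝ)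
    {n : ℕ} (D : Fin n → X) (h : (Fin d → ℝ) → Fin k) : Prop :=
  h ∈ rules Q k ∧ ∀ h' ∈ rules Q k, empRisk t φ h D ≤ empRisk t φ h' D

/-- Excess risk of ERMs: worst population risk of an ERM minus the Bayes error. -/
noncomputable def excessRisk (Q : ProbingFamily d) (t : InvTask X r k)
    (φ : X → Fin d → ℝ) {n : ℕ} (D : Fin n → X) : ℝ :=
  sSup ((fun h => risk t φ h) '' {h | IsERM Q t φ D h}) - bayes t

/-- Expected excess risk over datasets of `n` i.i.d. inputs labeled by the most likely label. -/
noncomputable def expExcess (Q : ProbingFamily d) (t : InvTask X r k)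
    (φ : X → Fin d → ℝ) (n : ℕ) : ℝ :=
  ∑ D : Fin n → X, (∏ i, marginal t (D i)) * excessRisk Q t φ D

/-- Worst-case (over invariant tasks) expected excess risk of ERMs. -/
noncomputable def worstExcess (r : Setoid X) (Q : ProbingFamily d)
    (φ : X → Fin d → ℝ) (n : ℕ) : ℝ :=
  sSup {e : ℝ | ∃ k : ℕ, 2 ≤ k ∧ k ≤ nequiv r ∧ ∃ t : InvTask X r k, e = expExcess Q t φ n}

/-- `φ` is sample optimal: population optimal and minimizing the worst-case expected
excess risk of ERMs among population-optimal encoders, for every sample size. -/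
noncomputable def SampleOptimal (r : Setoid X) (Q : ProbingFamily d)
    (φ : X → Fin d → ℝ) : Prop :=
  PopOptimal r Q φ ∧
    ∀ n : ℕ, 1 ≤ n → ∀ φ' : X → Fin d → ℝ, PopOptimal r Q φ' →
      worstExcess r Q φ n ≤ worstExcess r Q φ' n

/-- Probability of an equivalence class under the input marginal of `t`. -/
noncomputable def classProb (t : InvTask X r k) (c : Quotient r) : ℝ :=
  ∑ x : X, if Quotient.mk r x = c then marginal t x else 0

/-- Conditional probability of label `y` given the equivalence class `c` under `t`. -/
noncomputable def classCond (t : InvTask X r k) (c : Quotient r) (y : Fin k) : ℝ :=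
  (∑ x : X, if Quotient.mk r x = c then t.p x y else 0) / classProb t c

/-- `φ` is `(X,∼)`-shattered by `Q`: every invariant binary labeling is realized. -/
noncomputable def InvShattered (r : Setoid X) (Q : ProbingFamily d)
    (φ : X → Fin d → ℝ) : Prop :=
  ∀ c : X → Fin 2, IsInvariant r c → ∃ f ∈ Q.mem 1, ∀ x, c x = predBin (f (φ x))

/-- A set `Z ⊆ ℝ^d` is classically shattered by `Q`. -/
noncomputable def ClassicallyShattered {d : ℕ} (Q : ProbingFamily d)
    (Z : Set (Fin d → ℝ)) : Prop :=
  ∀ c : (Fin d → ℝ) → Fin 2, ∃ f ∈ Q.mem 1, ∀ z ∈ Z, c z = predBin (f z)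


/-- Max property of `predArg`. -/
lemma predArg_spec {k : ℕ} [NeZero k] (v : Fin k → ℝ) : ∀ a, v a ≤ v (predArg v) := by
  intro a
  have h := Classical.choose_spec ((Finset.univ : Finset (Fin k)).exists_max_image v
    ⟨⟨0, Nat.pos_of_ne_zero (NeZero.ne k)⟩, Finset.mem_univ _⟩)
  exact h.2 a (Finset.mem_univ a)

/-- `predArg` of a one-hot vector is the hot coordinate. -/
lemma predArg_onehot {k : ℕ} [NeZero k] (c : Fin k) :
    predArg (fun j => if j = c then (1 : ℝ) else 0) = c := by
  set v : Fin k → ℝ := fun j => if j = c then (1 : ℝ) else 0 with hv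
  by_contra hne
  have h1 : v c ≤ v (predArg v) := predArg_spec v c
  simp only [hv, if_pos rfl, if_neg hne] at h1
  have hne' : ¬ predArg (fun j => if j = c then (1 : ℝ) else 0) = c := hne
  rw [if_neg hne'] at h1
  linarith

/-- Pulled-back label along a maximal invariant. -/
noncomputable def labelOf {X : Type*} [Fintype X] {r : Setoid X} {d k : ℕ}
    (M : X → Fin d) (t : InvTask X r k) (hk : 2 ≤ k) : Fin d → Fin k :=
  fun j => if h : ∃ x, M x = j then t.label h.choose else ⟨0, by omega⟩

lemma labelOf_eq {X : Type*} [Fintype X] {r : Setoid X} {d k : ℕ}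
    {M : X → Fin d} (hM : IsMaximalInvariant r M) (t : InvTask X r k) (hk : 2 ≤ k)
    (x : X) : labelOf M t hk (M x) = t.label x := by
  have hex : ∃ x', M x' = M x := ⟨x, rfl⟩
  rw [labelOf, dif_pos hex]
  exact t.label_inv _ _ ((hM _ _).mp hex.choose_spec)

/-- Risk rewrites as `1 - ∑ₓ p x (h (φ x))`. -/
lemma risk_eq {X : Type*} [Fintype X] {r : Setoid X} {d k : ℕ}
    (t : InvTask X r k) (φ : X → Fin d → ℝ) (h : (Fin d → ℝ) → Fin k) :
    risk t φ h = 1 - ∑ x : X, t.p x (h (φ x)) := by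
  unfold risk
  have hx : ∀ x : X, ∑ y : Fin k, t.p x y * (if y = h (φ x) then 0 else 1)
      = (∑ y : Fin k, t.p x y) - t.p x (h (φ x)) := by
    intro x
    have : ∀ y : Fin k, t.p x y * (if y = h (φ x) then 0 else 1)
        = t.p x y - (if y = h (φ x) then t.p x y else 0) := by
      intro y; by_cases hy : y = h (φ x) <;> simp [hy]
    rw [Finset.sum_congr rfl fun y _ => this y, Finset.sum_sub_distrib,
      Finset.sum_ite_eq' Finset.univ (h (φ x)) (t.p x)]
    simp
  rw [Finset.sum_congr rfl fun x _ => hx x, Finset.sum_sub_distrib, t.sum_one]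

/-- **Lemma** (existence of a population-optimal encoder). The one-hot encoding of a
maximal invariant is population optimal for the `∼`-invariant tasks and the linear
probing family; in particular a population-optimal encoder exists. -/
theorem popOptimal_oneHot {X : Type*} [Fintype X] (r : Setoid X)
    (hn : 2 ≤ nequiv r) (M : X → Fin (nequiv r)) (hM : IsMaximalInvariant r M) :
    PopOptimal r (linearFamily (nequiv r))
        (fun x => fun j => if j = M x then (1 : ℝ) else 0) ∧
      ∃ φ : X → Fin (nequiv r) → ℝ, PopOptimal r (linearFamily (nequiv r)) φ := by
  have main : PopOptimal r (linearFamily (nequiv r))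
      (fun x => fun j => if j = M x then (1 : ℝ) else 0) := by
    intro k hk2 hkn t
    set φ : X → Fin (nequiv r) → ℝ := fun x => fun j => if j = M x then (1 : ℝ) else 0
      with hφ
    -- lower bound: every rule has risk at least the Bayes error
    have hlb : ∀ a ∈ (fun h => risk t φ h) '' rules (linearFamily (nequiv r)) k,
        bayes t ≤ a := by
      rintro a ⟨h, _, rfl⟩
      show bayes t ≤ risk t φ h
      rw [risk_eq, bayes]
      have hle : ∀ x : X, t.p x (h (φ x)) ≤ t.p x (t.label x) := by
        intro x
        by_cases hy : h (φ x) = t.label x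
        · rw [hy]
        · exact le_of_lt (t.label_argmax x _ hy)
      have := Finset.sum_le_sum (fun x (_ : x ∈ Finset.univ) => hle x)
      linarith
    -- existence of an optimal rule
    have hex : ∃ h ∈ rules (linearFamily (nequiv r)) k, ∀ x, h (φ x) = t.label x := by
      set L : Fin (nequiv r) → Fin k := labelOf M t hk2 with hL
      have hLe : ∀ x, L (M x) = t.label x := fun x => labelOf_eq hM t hk2 x
      rcases k with _ | _ | _ | n
      · omega
      · omega
      · -- binary case: scalar linear probe with sign prediction
        set W : Matrix (Fin (nequiv r)) (Fin 1) ℝ := fun i _ => if L i = 1 then 1 else -1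
          with hW
        set f : (Fin (nequiv r) → ℝ) → Fin 1 → ℝ := fun z j => ∑ i, W i j * z i with hf
        refine ⟨fun z => predBin (f z), ⟨f, ⟨W, fun z j => rfl⟩, fun z => rfl⟩, ?_⟩
        intro x
        show predBin (f (φ x)) = t.label x
        have hfx : f (φ x) 0 = if L (M x) = 1 then 1 else -1 := by
          simp only [hf, hφ, hW, mul_ite, mul_one, mul_zero]
          rw [Finset.sum_ite_eq' Finset.univ (M x)]
          simp
        rw [hLe x] at hfx
        by_cases hl : t.label x = 1
        · simp [predBin, hfx, hl]
        · have h0 : t.label x = 0 := by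
            have h2 := (t.label x).isLt
            have h1 : (t.label x).val ≠ 1 := fun hh => hl (Fin.ext hh)
            have hv : (t.label x).val = 0 := by omega
            exact Fin.ext (by simp [hv])
          rw [if_neg hl] at hfx
          simp [predBin, hfx, h0]
      · -- k ≥ 3: argmax of a one-hot linear probe
        set W : Matrix (Fin (nequiv r)) (Fin (n + 3)) ℝ := fun i j => if j = L i then 1 else 0
          with hW
        set f : (Fin (nequiv r) → ℝ) → Fin (n + 3) → ℝ := fun z j => ∑ i, W i j * z i
          with hf
        refine ⟨fun z => predArg (f z), ⟨f, ⟨W, fun z j => rfl⟩, fun z => rfl⟩, ?_⟩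
        intro x
        show predArg (f (φ x)) = t.label x
        have hfx : f (φ x) = fun j => if j = t.label x then (1 : ℝ) else 0 := by
          funext j
          simp only [hf, hφ, hW, mul_ite, mul_one, mul_zero]
          rw [Finset.sum_ite_eq' Finset.univ (M x)]
          simp [hLe x]
        rw [hfx, predArg_onehot]
    obtain ⟨h, hmem, hpred⟩ := hex
    have hbmem : bayes t ∈ (fun h => risk t φ h) '' rules (linearFamily (nequiv r)) k := by
      refine ⟨h, hmem, ?_⟩
      show risk t φ h = bayes t
      rw [risk_eq, bayes]
      rw [Finset.sum_congr rfl fun x _ => by rw [hpred x]]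
    exact le_antisymm (csInf_le ⟨bayes t, hlb⟩ hbmem) (le_csInf ⟨bayes t, hbmem⟩ hlb)
  exact ⟨main, _, main⟩

end ISSL
end

section
/- Lemma (optimal excess risk in closed form): Let φ* : X → ℝ^d be a ∼-invariant encoder that is population optimal for the ∼-invariant tasks T∼ and a probing family Q containing all linear predictors and closed under vector manipulation. Then for every task t ∈ T∼, every n ≥ 1 and every dataset D in the support of p_t^n(X, c_t(X)): (a) φ* minimizes the excess risk W(·, Q, t, D) over all population-optimal encoders; and (b) W(φ*, Q, t, D) = Σ_{[x] ∈ X/∼ not represented among the inputs of D} p_t([x]) · ( max_y p_t(y|[x]) − min_y p_t(y|[x]) ), where p_t(y|[x]) = P_{p_t}(Y = y | X ∈ [x]) and p_t([x]) = P_{p_t}(X ∈ [x]). -/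
open scoped Classical
open Finset

namespace ISSL

variable {X : Type*} [Fintype X] {r : Setoid X} {d k : ℕ}

section Aux

variable {X : Type*} [Fintype X] {r : Setoid X} {d k : ℕ}

/-- Risk as a function of the induced labeling. -/
noncomputable def riskOf (t : InvTask X r k) (u : X → Fin k) : ℝ :=
  1 - ∑ x : X, t.p x (u x)

lemma risk_eq_riskOf (t : InvTask X r k) (φ : X → Fin d → ℝ) (h : (Fin d → ℝ) → Fin k) :
    risk t φ h = riskOf t (fun x => h (φ x)) := by
  have hx : ∀ x : X, ∑ y : Fin k, t.p x y * (if y = h (φ x) then 0 else 1)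
      = (∑ y : Fin k, t.p x y) - t.p x (h (φ x)) := by
    intro x
    have h1 : ∀ y : Fin k, t.p x y * (if y = h (φ x) then 0 else 1)
        = t.p x y - (if y = h (φ x) then t.p x y else 0) := by
      intro y; split_ifs with h' <;> simp
    rw [Finset.sum_congr rfl fun y _ => h1 y, Finset.sum_sub_distrib,
      Finset.sum_ite_eq']
    simp
  unfold risk riskOf
  rw [Finset.sum_congr rfl fun x _ => hx x, Finset.sum_sub_distrib, t.sum_one]

lemma sum_apply_le (t : InvTask X r k) (u : X → Fin k) :
    ∑ x : X, t.p x (u x) ≤ ∑ x : X, t.p x (t.label x) :=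
  Finset.sum_le_sum fun x _ => by
    rcases eq_or_ne (u x) (t.label x) with h | h
    · rw [h]
    · exact (t.label_argmax x (u x) h).le

lemma bayes_le_riskOf (t : InvTask X r k) (u : X → Fin k) :
    bayes t ≤ riskOf t u := by
  have := sum_apply_le t u
  simp only [bayes, riskOf]
  linarith

lemma eq_label_of_riskOf_eq (t : InvTask X r k) (u : X → Fin k)
    (h : riskOf t u = bayes t) : ∀ x, u x = t.label x := by
  intro x
  by_contra hx
  have hlt : ∑ x : X, t.p x (u x) < ∑ x : X, t.p x (t.label x) :=
    Finset.sum_lt_sum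
      (fun y _ => by
        rcases eq_or_ne (u y) (t.label y) with h' | h'
        · rw [h']
        · exact (t.label_argmax y (u y) h').le)
      ⟨x, Finset.mem_univ x, t.label_argmax x (u x) hx⟩
  simp only [riskOf, bayes] at h
  linarith

lemma rules_nonempty (Q : ProbingFamily d) (hQlin : ContainsLinear Q) (hk : 2 ≤ k) :
    (rules Q k).Nonempty := by
  have hzero : ∀ m : ℕ, (fun (_ : Fin d → ℝ) (_ : Fin m) => (0 : ℝ)) ∈ Q.mem m := by
    intro m
    exact hQlin m ⟨0, by intro z j; simp⟩
  rcases Nat.lt_or_ge k 3 with h3 | h3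
  · have hk2 : k = 2 := by omega
    subst hk2
    exact ⟨fun z => predBin (fun _ => (0 : ℝ)), ⟨_, hzero 1, fun z => rfl⟩⟩
  · obtain ⟨m, rfl⟩ : ∃ m, k = m + 3 := ⟨k - 3, by omega⟩
    exact ⟨fun z => predArg (fun _ => (0 : ℝ)), ⟨_, hzero (m + 3), fun z => rfl⟩⟩

/-- Realization: through any population-optimal encoder, every invariant labeling is
realized by some rule of the probing family. -/
lemma realize {Q : ProbingFamily d} (hQlin : ContainsLinear Q)
    {ψ : X → Fin d → ℝ} (hψ : PopOptimal r Q ψ)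
    (hk2 : 2 ≤ k) (hkn : k ≤ nequiv r)
    (c : X → Fin k) (hc : IsInvariant r c) :
    ∃ h ∈ rules Q k, ∀ x, h (ψ x) = c x := by
  haveI hXne : Nonempty X := by
    have h0 : 0 < Nat.card (Quotient r) := by
      have := hk2.trans hkn
      unfold nequiv at this
      omega
    have h1 : Nonempty (Quotient r) := (Nat.card_pos_iff.mp h0).1
    exact h1.map Quotient.out
  have hN : (0 : ℝ) < (Fintype.card X : ℝ) := by
    exact_mod_cast Fintype.card_pos
  have hk1 : (0 : ℝ) < (k : ℝ) + 1 := by positivity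
  have hD : (0 : ℝ) < (Fintype.card X : ℝ) * ((k : ℝ) + 1) := mul_pos hN hk1
  let t : InvTask X r k :=
  { p := fun x y => (if y = c x then 2 else 1) / ((Fintype.card X : ℝ) * ((k : ℝ) + 1))
    nonneg := fun x y => by
      apply div_nonneg _ hD.le
      split_ifs <;> norm_num
    sum_one := by
      have hy : ∀ x : X, ∑ y : Fin k, (if y = c x then (2 : ℝ) else 1) = (k : ℝ) + 1 := by
        intro x
        have h1 : ∀ y : Fin k, (if y = c x then (2 : ℝ) else 1)
            = (if y = c x then (1 : ℝ) else 0) + 1 := by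
          intro y; split_ifs <;> norm_num
        rw [Finset.sum_congr rfl fun y _ => h1 y, Finset.sum_add_distrib,
          Finset.sum_ite_eq']
        simp [Finset.card_univ, add_comm]
      have : ∑ x : X, ∑ y : Fin k,
          (if y = c x then (2 : ℝ) else 1) / ((Fintype.card X : ℝ) * ((k : ℝ) + 1))
          = ∑ x : X, ((k : ℝ) + 1) / ((Fintype.card X : ℝ) * ((k : ℝ) + 1)) := by
        refine Finset.sum_congr rfl fun x _ => ?_
        rw [← Finset.sum_div, hy x]
      rw [this, Finset.sum_const, Finset.card_univ, nsmul_eq_mul]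
      field_simp
    label := c
    label_argmax := fun x y hy => by
      simp only [if_neg hy, if_pos rfl]
      exact div_lt_div_of_pos_right one_lt_two hD
    label_inv := fun x x' hxx' => hc x x' hxx' }
  have hopt := hψ k hk2 hkn t
  have hAne : ((fun h => risk t ψ h) '' rules Q k).Nonempty :=
    (rules_nonempty Q hQlin hk2).image _
  have hAfin : ((fun h => risk t ψ h) '' rules Q k).Finite := by
    apply Set.Finite.subset (Set.finite_range (riskOf t))
    rintro _ ⟨h, _, rfl⟩
    exact ⟨fun x => h (ψ x), (risk_eq_riskOf t ψ h).symm⟩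
  have hmem := hAne.csInf_mem hAfin
  rw [hopt] at hmem
  obtain ⟨h, hh, hrb⟩ := hmem
  refine ⟨h, hh, ?_⟩
  have heq := eq_label_of_riskOf_eq t (fun x => h (ψ x))
    (by rw [← risk_eq_riskOf]; exact hrb)
  exact heq

/-- Mass of label `y` within class `c`. -/
noncomputable def Sc (t : InvTask X r k) (c : Quotient r) (y : Fin k) : ℝ :=
  ∑ x : X, if Quotient.mk r x = c then t.p x y else 0

lemma Sc_nonneg (t : InvTask X r k) (c : Quotient r) (y : Fin k) : 0 ≤ Sc t c y :=
  Finset.sum_nonneg fun x _ => by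
    split_ifs
    · exact t.nonneg x y
    · exact le_rfl

lemma sum_quot (t : InvTask X r k) (g : Quotient r → Fin k) :
    ∑ x : X, t.p x (g (Quotient.mk r x)) = ∑ c : Quotient r, Sc t c (g c) := by
  unfold Sc
  rw [Finset.sum_comm]
  refine Finset.sum_congr rfl fun x _ => ?_
  rw [Finset.sum_ite_eq]
  simp

lemma Sc_le_label (t : InvTask X r k) (c : Quotient r) (y : Fin k) :
    Sc t c y ≤ Sc t c (t.label c.out) := by
  refine Finset.sum_le_sum fun x _ => ?_
  split_ifs with hx
  · have hr : r x c.out := Quotient.exact (by rw [Quotient.out_eq, hx])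
    rw [← t.label_inv x c.out hr]
    rcases eq_or_ne y (t.label x) with h' | h'
    · rw [h']
    · exact (t.label_argmax x y h').le
  · exact le_rfl

lemma classProb_eq_sum_Sc (t : InvTask X r k) (c : Quotient r) :
    classProb t c = ∑ y : Fin k, Sc t c y := by
  unfold classProb marginal Sc
  rw [Finset.sum_comm]
  refine Finset.sum_congr rfl fun x _ => ?_
  split_ifs
  · rfl
  · exact Finset.sum_const_zero.symm

end Aux

/-- **Lemma** (optimal excess risk in closed form). A `∼`-invariant population-optimal
encoder minimizes the excess risk of ERMs on every invariant task and dataset, and its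
excess risk equals the mass of unseen equivalence classes weighted by the gap between the
largest and smallest conditional label probabilities. -/
theorem excessRisk_of_invariant_popOptimal {X : Type*} [Fintype X] (r : Setoid X)
    (hn : 2 ≤ nequiv r) {d : ℕ} (Q : ProbingFamily d)
    (hQlin : ContainsLinear Q) (hQclosed : ClosedUnderVectorManipulation Q)
    (φ : X → Fin d → ℝ) (hφinv : IsInvariant r φ) (hφpop : PopOptimal r Q φ) :
    ∀ k : ℕ, 2 ≤ k → k ≤ nequiv r → ∀ t : InvTask X r k,
      ∀ n : ℕ, 1 ≤ n → ∀ D : Fin n → X, (∀ i, 0 < marginal t (D i)) →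
        ((∀ ψ : X → Fin d → ℝ, PopOptimal r Q ψ →
            excessRisk Q t φ D ≤ excessRisk Q t ψ D) ∧
          excessRisk Q t φ D =
            ∑ c : Quotient r,
              if ∀ i, Quotient.mk r (D i) ≠ c then
                classProb t c *
                  (sSup (Set.range (classCond t c)) - sInf (Set.range (classCond t c)))
              else 0) := by
  intro k hk2 hkn t n hn1 D hD
  haveI : Nonempty (Fin k) := ⟨⟨0, by omega⟩⟩
  -- the label as a function of the class
  set labelQ : Quotient r → Fin k := fun c => t.label c.out with hlabelQdef
  have hout : ∀ x : X, r ((Quotient.mk r x).out) x := fun x =>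
    Quotient.exact (Quotient.out_eq _)
  have hlabel : ∀ x, t.label x = labelQ (Quotient.mk r x) := fun x =>
    (t.label_inv _ _ (hout x)).symm
  -- empirical-risk basics
  have hempnn : ∀ (ψ : X → Fin d → ℝ) (h : (Fin d → ℝ) → Fin k),
      0 ≤ empRisk t ψ h D := by
    intro ψ h
    apply div_nonneg _ (Nat.cast_nonneg n)
    exact Finset.sum_nonneg fun i _ => by split_ifs <;> norm_num
  have hempzero : ∀ (ψ : X → Fin d → ℝ) (h : (Fin d → ℝ) → Fin k),
      (∀ i, h (ψ (D i)) = t.label (D i)) → empRisk t ψ h D = 0 := by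
    intro ψ h hag
    unfold empRisk
    rw [Finset.sum_eq_zero fun i _ => by rw [if_pos (hag i).symm], zero_div]
  have hERMzero : ∀ (ψ : X → Fin d → ℝ) (h : (Fin d → ℝ) → Fin k),
      h ∈ rules Q k → (∀ i, h (ψ (D i)) = t.label (D i)) → IsERM Q t ψ D h := by
    intro ψ h hh hag
    exact ⟨hh, fun h' hh' => by rw [hempzero ψ h hag]; exact hempnn ψ h'⟩
  -- a rule realizing the label through φ
  obtain ⟨h₀, hh₀, hag₀⟩ := realize hQlin hφpop hk2 hkn t.label t.label_inv
  -- characterization of ERMs through φ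
  have hERMchar : ∀ h : (Fin d → ℝ) → Fin k, IsERM Q t φ D h →
      ∀ i, h (φ (D i)) = t.label (D i) := by
    intro h hE i
    obtain ⟨hh, hmin⟩ := hE
    have hle := hmin h₀ hh₀
    rw [hempzero φ h₀ (fun i => hag₀ (D i))] at hle
    have hnpos : (0 : ℝ) < (n : ℝ) := by exact_mod_cast hn1
    unfold empRisk at hle
    have hsle : ∑ i : Fin n, (if t.label (D i) = h (φ (D i)) then (0 : ℝ) else 1) ≤ 0 := by
      have := (div_le_iff₀ hnpos).mp hle
      simpa using this
    have hseq := le_antisymm hsle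
      (Finset.sum_nonneg fun i _ => by split_ifs <;> norm_num)
    have hzero := (Finset.sum_eq_zero_iff_of_nonneg
      (fun i _ => by split_ifs <;> norm_num)).mp hseq i (Finset.mem_univ i)
    by_contra hne
    rw [if_neg (fun hc => hne hc.symm)] at hzero
    norm_num at hzero
  -- risk of a rule inducing an invariant labeling
  have hriskinv : ∀ (ψ : X → Fin d → ℝ) (h : (Fin d → ℝ) → Fin k)
      (g : Quotient r → Fin k), (∀ x, h (ψ x) = g (Quotient.mk r x)) →
      risk t ψ h = 1 - ∑ c : Quotient r, Sc t c (g c) := by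
    intro ψ h g hg
    rw [risk_eq_riskOf]
    unfold riskOf
    rw [← sum_quot t g]
    congr 1
    exact Finset.sum_congr rfl fun x _ => congrArg (t.p x) (hg x)
  -- minimizers of Sc per class
  have hyMinEx : ∀ c : Quotient r, ∃ y : Fin k, ∀ y', Sc t c y ≤ Sc t c y' := by
    intro c
    obtain ⟨y, _, hy⟩ := Finset.exists_min_image Finset.univ (Sc t c)
      ⟨Classical.arbitrary (Fin k), Finset.mem_univ _⟩
    exact ⟨y, fun y' => hy y' (Finset.mem_univ _)⟩
  choose yMin hyMin using hyMinEx
  set seen : Quotient r → Prop := fun c => ∃ i, Quotient.mk r (D i) = c with hseendef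
  set gS : Quotient r → Fin k := fun c => if seen c then labelQ c else yMin c with hgSdef
  have hgSseen : ∀ i, gS (Quotient.mk r (D i)) = t.label (D i) := fun i => by
    simp only [hgSdef, if_pos (⟨i, rfl⟩ : seen (Quotient.mk r (D i)))]
    exact (if_pos (⟨i, rfl⟩ : seen (Quotient.mk r (D i)))).trans (hlabel (D i)).symm
  -- the image of risks of ERMs through φ
  have hsetEq : (fun h => risk t φ h) '' {h | IsERM Q t φ D h}
      = (fun g => 1 - ∑ c : Quotient r, Sc t c (g c)) ''
        {g : Quotient r → Fin k | ∀ i, g (Quotient.mk r (D i)) = t.label (D i)} := by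
    ext v
    constructor
    · rintro ⟨h, hE, rfl⟩
      have hag := hERMchar h hE
      refine ⟨fun c => h (φ c.out), fun i => ?_, ?_⟩
      · show h (φ ((Quotient.mk r (D i)).out)) = t.label (D i)
        rw [hφinv _ _ (hout (D i))]
        exact hag i
      · refine (hriskinv φ h _ fun x => ?_).symm
        exact congrArg h (hφinv x _ (Setoid.symm (hout x)))
    · rintro ⟨g, hg, rfl⟩
      obtain ⟨h, hh, hhx⟩ := realize hQlin hφpop hk2 hkn (fun x => g (Quotient.mk r x))
        (fun x x' hxx' => congrArg g (Quotient.sound hxx'))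
      refine ⟨h, hERMzero φ h hh fun i => by rw [hhx (D i)]; exact hg i, ?_⟩
      exact hriskinv φ h g hhx
  have hgSmem : (1 - ∑ c : Quotient r, Sc t c (gS c)) ∈
      (fun g => 1 - ∑ c : Quotient r, Sc t c (g c)) ''
        {g : Quotient r → Fin k | ∀ i, g (Quotient.mk r (D i)) = t.label (D i)} :=
    ⟨gS, fun i => hgSseen i, rfl⟩
  have hub : ∀ v ∈ (fun g => 1 - ∑ c : Quotient r, Sc t c (g c)) ''
      {g : Quotient r → Fin k | ∀ i, g (Quotient.mk r (D i)) = t.label (D i)},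
      v ≤ 1 - ∑ c : Quotient r, Sc t c (gS c) := by
    rintro _ ⟨g, hg, rfl⟩
    have hsum : ∑ c : Quotient r, Sc t c (gS c) ≤ ∑ c : Quotient r, Sc t c (g c) := by
      refine Finset.sum_le_sum fun c _ => ?_
      by_cases hc : seen c
      · obtain ⟨i, rfl⟩ := hc
        exact le_of_eq (by rw [hgSseen i, hg i])
      · simp only [hgSdef, if_neg hc]
        exact hyMin c (g c)
    simp only
    linarith
  have hBfin : ((fun g => 1 - ∑ c : Quotient r, Sc t c (g c)) ''
      {g : Quotient r → Fin k | ∀ i, g (Quotient.mk r (D i)) = t.label (D i)}).Finite :=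
    Set.Finite.image _ (Set.toFinite _)
  have hSup : sSup ((fun h => risk t φ h) '' {h | IsERM Q t φ D h})
      = 1 - ∑ c : Quotient r, Sc t c (gS c) := by
    rw [hsetEq]
    exact le_antisymm (csSup_le ⟨_, hgSmem⟩ hub) (le_csSup hBfin.bddAbove hgSmem)
  constructor
  · -- part (a)
    intro ψ hψpop
    unfold excessRisk
    rw [hSup]
    have hBdd : BddAbove ((fun h => risk t ψ h) '' {h | IsERM Q t ψ D h}) := by
      apply Set.Finite.bddAbove
      apply Set.Finite.subset (Set.finite_range (riskOf t))
      rintro _ ⟨h', _, rfl⟩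
      exact ⟨fun x => h' (ψ x), (risk_eq_riskOf t ψ h').symm⟩
    obtain ⟨h, hh, hhx⟩ := realize hQlin hψpop hk2 hkn (fun x => gS (Quotient.mk r x))
      (fun x x' hxx' => congrArg gS (Quotient.sound hxx'))
    have hE : IsERM Q t ψ D h :=
      hERMzero ψ h hh fun i => by rw [hhx (D i)]; exact hgSseen i
    have hval : risk t ψ h = 1 - ∑ c : Quotient r, Sc t c (gS c) := hriskinv ψ h gS hhx
    have : (1 : ℝ) - ∑ c : Quotient r, Sc t c (gS c)
        ≤ sSup ((fun h => risk t ψ h) '' {h | IsERM Q t ψ D h}) := by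
      rw [← hval]
      exact le_csSup hBdd ⟨h, hE, rfl⟩
    linarith
  · -- part (b)
    unfold excessRisk
    rw [hSup]
    have hbayes : bayes t = 1 - ∑ c : Quotient r, Sc t c (labelQ c) := by
      unfold bayes
      rw [← sum_quot t labelQ]
      congr 1
      exact Finset.sum_congr rfl fun x _ => by rw [hlabel x]
    rw [hbayes, show (1 - ∑ c : Quotient r, Sc t c (gS c))
        - (1 - ∑ c : Quotient r, Sc t c (labelQ c))
        = ∑ c : Quotient r, (Sc t c (labelQ c) - Sc t c (gS c)) by
      rw [Finset.sum_sub_distrib]; ring]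
    refine Finset.sum_congr rfl fun c _ => ?_
    by_cases hc : seen c
    · rw [if_neg (by push_neg; exact hc)]
      simp only [hgSdef, if_pos hc]
      ring
    · rw [if_pos (not_exists.mp hc)]
      simp only [hgSdef, if_neg hc]
      have hcond : ∀ y, classCond t c y = Sc t c y / classProb t c := fun y => rfl
      by_cases hP : classProb t c = 0
      · have hS0 : ∀ y, Sc t c y = 0 := by
          have hsum0 : ∑ y : Fin k, Sc t c y = 0 := by
            rw [← classProb_eq_sum_Sc]; exact hP
          exact fun y => (Finset.sum_eq_zero_iff_of_nonneg
            (fun y _ => Sc_nonneg t c y)).mp hsum0 y (Finset.mem_univ y)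
        rw [hS0, hS0, hP, zero_mul, sub_zero]
      · have hPpos : 0 < classProb t c :=
          lt_of_le_of_ne (by rw [classProb_eq_sum_Sc]
                             exact Finset.sum_nonneg fun y _ => Sc_nonneg t c y)
            (Ne.symm hP)
        have hmax : ∀ y, classCond t c y ≤ classCond t c (labelQ c) := fun y => by
          rw [hcond, hcond]
          exact (div_le_div_iff_of_pos_right hPpos).mpr (Sc_le_label t c y)
        have hmin' : ∀ y, classCond t c (yMin c) ≤ classCond t c y := fun y => by
          rw [hcond, hcond]
          exact (div_le_div_iff_of_pos_right hPpos).mpr (hyMin c y)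
        have hsupv : sSup (Set.range (classCond t c)) = classCond t c (labelQ c) :=
          le_antisymm
            (csSup_le (Set.range_nonempty _) (by rintro _ ⟨y, rfl⟩; exact hmax y))
            (le_csSup (Set.finite_range _).bddAbove ⟨_, rfl⟩)
        have hinfv : sInf (Set.range (classCond t c)) = classCond t c (yMin c) :=
          le_antisymm
            (csInf_le (Set.finite_range _).bddBelow ⟨_, rfl⟩)
            (le_csInf (Set.range_nonempty _) (by rintro _ ⟨y, rfl⟩; exact hmin' y))
        rw [hsupv, hinfv, hcond, hcond]
        field_simp

end ISSL
end

section
/- Lemma (marginal matching characterizes maximality of a deterministic invariant teacher): Let X be a finite set with equivalence relation ∼ having n∼ ≥ 2 equivalence classes, let p be a probability mass function on X with full support, and let q assign to each x ∈ X a probability mass function q(·|x) on {0,…,n∼−1} that is deterministic (for every x, some category has probability 1 under q(·|x)) and ∼-invariant (x ∼ x′ implies q(·|x) = q(·|x′)). Then q is maximal (i.e., x ≁ x⁻ implies q(·|x) ≠ q(·|x⁻)) if and only if there exists a maximal invariant M : X → {0,…,n∼−1} such that the marginal m ↦ Σ_{x∈X} p(x)·q(m|x) equals the pushforward of p by M (the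 distribution of M(X) when X ∼ p). -/
/-!
A deterministic teacher is the indicator `q(·|x) = δ_{L x}` of a label map `L`, which is
invariant when `q` is; its marginal is then the pushforward of `p` by `L`, and `q` is maximal
iff `L` is a maximal invariant. With `n∼` labels, an invariant `L` is a maximal invariant iff it
is onto, since the induced map on the `n∼` classes is injective iff surjective. Because `p` has
full support, the support of a pushforward is the range of the map, so matching the pushforward
by a (surjective) maximal invariant `M` forces `L` to be onto.
-/

open scoped Classical
open Finset

namespace ISSL

variable {X : Type*} [Fintype X] {r : Setoid X} {d k : ℕ}

theorem eq_ite_of_sum_eq_one {ι R : Type*} [Fintype ι] [DecidableEq ι] [AddCommMonoid R]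
    [PartialOrder R] [IsOrderedCancelAddMonoid R] [One R] {f : ι → R} {i : ι}
    (h0 : ∀ j, 0 ≤ f j) (h1 : ∑ j, f j = 1) (hi : f i = 1) :
    f = fun j => if j = i then 1 else 0 := by
  have hrest : ∑ j ∈ univ.erase i, f j = 0 := by
    rw [← add_sum_erase univ f (mem_univ i), hi] at h1
    exact add_eq_left.mp h1
  funext j
  split_ifs with hj
  · rw [hj, hi]
  · exact (sum_eq_zero_iff_of_nonneg fun k _ => h0 k).mp hrest j (mem_erase.mpr ⟨hj, mem_univ j⟩)

def pushforward {X β R : Type*} [Fintype X] [DecidableEq β] [AddCommMonoid R]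
    (p : X → R) (f : X → β) (b : β) : R :=
  ∑ x, if f x = b then p x else 0

theorem pushforward_pos_iff {X β R : Type*} [Fintype X] [DecidableEq β] [AddCommMonoid R]
    [PartialOrder R] [IsOrderedAddMonoid R] {p : X → R} (hp : ∀ x, 0 < p x) {f : X → β} {b : β} :
    0 < pushforward p f b ↔ b ∈ Set.range f := by
  rw [pushforward, sum_pos_iff_of_nonneg fun x _ => by split_ifs <;> simp [(hp x).le]]
  simp only [mem_univ, true_and, Set.mem_range]
  refine exists_congr fun x => ?_
  split_ifs with h <;> simp [h, hp x]

theorem range_eq_of_pushforward_eq {X β R : Type*} [Fintype X] [DecidableEq β] [AddCommMonoid R]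
    [PartialOrder R] [IsOrderedAddMonoid R] {p : X → R} (hp : ∀ x, 0 < p x) {f g : X → β}
    (h : pushforward p f = pushforward p g) : Set.range f = Set.range g := by
  ext b
  rw [← pushforward_pos_iff hp, ← pushforward_pos_iff hp, h]

section MaximalInvariant

variable {X : Type*} {r : Setoid X} {k : ℕ} {f : X → Fin k}

theorem IsMaximalInvariant.isInvariant (hf : IsMaximalInvariant r f) : IsInvariant r f :=
  fun x x' h => (hf x x').mpr h

theorem IsInvariant.isMaximalInvariant_iff (hf : IsInvariant r f) :
    IsMaximalInvariant r f ↔ ∀ x x', ¬r x x' → f x ≠ f x' :=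
  ⟨fun h x x' hr heq => hr ((h x x').mp heq),
    fun h x x' => ⟨fun heq => by_contra fun hr => h x x' hr heq, hf x x'⟩⟩

theorem IsInvariant.isMaximalInvariant_iff_injective_lift (hf : IsInvariant r f) :
    IsMaximalInvariant r f ↔ Function.Injective (Quotient.lift f fun x x' => hf x x') := by
  refine ⟨fun h a b => ?_, fun h x x' => ⟨fun heq => Quotient.exact (h heq), hf x x'⟩⟩
  induction a, b using Quotient.ind₂
  exact fun heq => Quotient.sound ((h _ _).mp heq)

theorem IsInvariant.isMaximalInvariant_iff_surjective [Finite X] {f : X → Fin (nequiv r)}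
    (hf : IsInvariant r f) : IsMaximalInvariant r f ↔ Function.Surjective f :=
  hf.isMaximalInvariant_iff_injective_lift.trans <|
    (Finite.injective_iff_surjective_of_equiv (Finite.equivFin (Quotient r))).trans
      (Quotient.lift_surjective_iff _ _)

theorem IsMaximalInvariant.surjective [Finite X] {f : X → Fin (nequiv r)}
    (hf : IsMaximalInvariant r f) : Function.Surjective f :=
  (hf.isInvariant.isMaximalInvariant_iff_surjective).mp hf

end MaximalInvariant

theorem teacher_maximal_iff_marginal_matching_general {X : Type*} [Fintype X] (r : Setoid X)
    (p : X → ℝ) (hpos : ∀ x, 0 < p x)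
    (q : X → Fin (nequiv r) → ℝ)
    (hq0 : ∀ x m, 0 ≤ q x m) (hq1 : ∀ x, ∑ m, q x m = 1)
    (hdet : ∀ x, ∃ m, q x m = 1)
    (hinv : ∀ x x', r x x' → q x = q x') :
    (∀ x x', ¬r x x' → q x ≠ q x') ↔
      ∃ M : X → Fin (nequiv r), IsMaximalInvariant r M ∧
        ∀ m : Fin (nequiv r),
          (∑ x : X, p x * q x m) = ∑ x : X, if M x = m then p x else 0 := by
  choose L hL using hdet
  have hqL : ∀ x, q x = fun m => if m = L x then 1 else 0 :=
    fun x => eq_ite_of_sum_eq_one (hq0 x) (hq1 x) (hL x)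
  have hq_eq : ∀ x x', q x = q x' ↔ L x = L x' := fun x x' =>
    ⟨fun h => by simpa [hqL x'] using (hL x).symm.trans (congrFun h (L x)),
      fun h => by rw [hqL, hqL, h]⟩
  have hLinv : IsInvariant r L := fun x x' h => (hq_eq x x').mp (hinv x x' h)
  have hmarg : (fun m => ∑ x, p x * q x m) = pushforward p L := by
    ext m
    simp only [pushforward, hqL, mul_ite, mul_one, mul_zero, eq_comm]
  simp only [ne_eq, hq_eq, ← hLinv.isMaximalInvariant_iff]
  refine ⟨fun hmax => ⟨L, hmax, congrFun hmarg⟩, fun ⟨M, hM, hmatch⟩ => ?_⟩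
  have hrange : Set.range L = Set.range M :=
    range_eq_of_pushforward_eq hpos (hmarg.symm.trans (funext hmatch))
  rw [hLinv.isMaximalInvariant_iff_surjective, ← Set.range_eq_univ, hrange, Set.range_eq_univ]
  exact hM.surjective

/-- **Lemma** (marginal matching characterizes maximality of a deterministic invariant
teacher): a deterministic `∼`-invariant teacher over `n∼` categories is maximal iff its
marginal matches the pushforward of the input distribution by some maximal invariant. -/
theorem teacher_maximal_iff_marginal_matching {X : Type*} [Fintype X] (r : Setoid X)
    (hn : 2 ≤ nequiv r)
    (p : X → ℝ) (hpos : ∀ x, 0 < p x) (hsum : ∑ x : X, p x = 1)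
    (q : X → Fin (nequiv r) → ℝ)
    (hq0 : ∀ x m, 0 ≤ q x m) (hq1 : ∀ x, ∑ m, q x m = 1)
    (hdet : ∀ x, ∃ m, q x m = 1)
    (hinv : ∀ x x', r x x' → q x = q x') :
    (∀ x x', ¬r x x' → q x ≠ q x') ↔
      ∃ M : X → Fin (nequiv r), IsMaximalInvariant r M ∧
        ∀ m : Fin (nequiv r),
          (∑ x : X, p x * q x m) = ∑ x : X, if M x = m then p x else 0 :=
  teacher_maximal_iff_marginal_matching_general r p hpos q hq0 hq1 hdet hinv

end ISSL
end
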